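/- arXiv:1103.4208 — 2 statements merged into one kernel-verified Lean document; each statement's English description precedes it below -/
import Mathlib

section
/- Let (X_m) be a birth-death chain on ℕ started at k ≥ 1 with up-probabilities r_n and down-probabilities l_n = 1 − r_n from state n ≥ 1, state 0 absorbing, and r_n ∈ (0,1). If t_∞ := lim_{n→∞} (l_1⋯l_n)/(r_1⋯r_n) exists in (0,∞), then lim_{m→∞} E[X_m] exists and equals (1 + l_1/r_1 + ⋯ + (l_1⋯l_{k−1})/(r_1⋯r_{k−1}))/t_∞. -/
open MeasureTheory ProbabilityTheory Filter Set

/-- A birth-death chain on ℕ with up-probabilities `r n` from state `n ≥ 1`,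
down-probabilities `1 - r n`, state `0` absorbing, started at `k`. -/
structure IsBirthDeathChain {Ω : Type*} [MeasurableSpace Ω] (μ : Measure Ω)
    (X : ℕ → Ω → ℕ) (r : ℕ → ℝ) (k : ℕ) : Prop where
  isProb : IsProbabilityMeasure μ
  meas : ∀ m, Measurable (X m)
  start : ∀ᵐ ω ∂μ, X 0 ω = k
  step_up : ∀ (m : ℕ) (path : ℕ → ℕ), 0 < path m →
    μ (⋂ i ∈ Finset.range (m + 1), {ω | X i ω = path i}) ≠ 0 →
    μ[{ω | X (m + 1) ω = path m + 1} | ⋂ i ∈ Finset.range (m + 1), {ω | X i ω = path i}]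
      = ENNReal.ofReal (r (path m))
  step_down : ∀ (m : ℕ) (path : ℕ → ℕ), 0 < path m →
    μ (⋂ i ∈ Finset.range (m + 1), {ω | X i ω = path i}) ≠ 0 →
    μ[{ω | X (m + 1) ω = path m - 1} | ⋂ i ∈ Finset.range (m + 1), {ω | X i ω = path i}]
      = ENNReal.ofReal (1 - r (path m))
  absorb : ∀ (m : ℕ) (path : ℕ → ℕ), path m = 0 →
    μ (⋂ i ∈ Finset.range (m + 1), {ω | X i ω = path i}) ≠ 0 →
    μ[{ω | X (m + 1) ω = 0} | ⋂ i ∈ Finset.range (m + 1), {ω | X i ω = path i}] = 1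

/-!
The scale function `h n = t₀ + ⋯ + t_{n-1}` is harmonic for the chain, so `E[h(X_m)] = h k` for
every `m`. Stopped at `N + 1`, it becomes a nonnegative superharmonic function with strictly
negative drift at `N + 1`, so `P(X_m = N)` is summable in `m` and tends to `0` for every `N ≥ 1`.
Since `t_n → t_∞ > 0`, the scale function satisfies `h n ≥ δ n` and, by Cesàro,
`n = h n / t_∞ + o(n)`. Hence `E[X_m]` is bounded, and in `E[X_m] - h k / t_∞ = E[g(X_m)]`
with `g n = o(n)`, `g 0 = 0`, the mass far out contributes at most `ε E[X_m]` while the mass on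
each finite set of positive states vanishes in the limit.
-/

open Finset Topology Asymptotics

lemma tendsto_sum_mul_of_isLittleO {ι : Type*} {l : Filter ι} {p : ι → ℕ → ℝ}
    {s : ι → Finset ℕ} {g : ℕ → ℝ} {C : ℝ} (hp : ∀ i n, 0 ≤ p i n)
    (hp0 : ∀ n, 1 ≤ n → Tendsto (fun i => p i n) l (𝓝 0))
    (hC : ∀ i, ∑ n ∈ s i, n * p i n ≤ C) (hg0 : g 0 = 0) (hg : g =o[atTop] fun n => (n : ℝ)) :
    Tendsto (fun i => ∑ n ∈ s i, g n * p i n) l (𝓝 0) := by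
  rw [Metric.tendsto_nhds]
  intro ε hε
  set ε' := ε / (2 * (|C| + 1)) with hε'_def
  have hε' : 0 < ε' := by positivity
  obtain ⟨N, hN⟩ := eventually_atTop.mp (hg.def hε')
  have hhead : Tendsto (fun i => ∑ n ∈ range N, |g n| * p i n) l (𝓝 0) := by
    rw [← show ∑ n ∈ range N, (0 : ℝ) = 0 from sum_const_zero]
    refine tendsto_finsetSum _ fun n _ => ?_
    rcases Nat.eq_zero_or_pos n with rfl | hn
    · simpa [hg0] using tendsto_const_nhds
    · simpa using (hp0 n hn).const_mul |g n|
  filter_upwards [(Metric.tendsto_nhds.mp hhead) (ε / 2) (by positivity)] with i hi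
  have hhead_nonneg : 0 ≤ ∑ n ∈ range N, |g n| * p i n :=
    sum_nonneg fun n _ => mul_nonneg (abs_nonneg _) (hp i n)
  rw [Real.dist_eq, sub_zero, abs_of_nonneg hhead_nonneg] at hi
  have hsplit : ∑ n ∈ s i, |g n| * p i n
      ≤ ∑ n ∈ range N, |g n| * p i n + ε' * ∑ n ∈ s i, n * p i n := by
    rw [← sum_filter_add_sum_filter_not (s i) (· < N), mul_sum]
    refine add_le_add (sum_le_sum_of_subset_of_nonneg (fun n hn => ?_)
      fun n _ _ => mul_nonneg (abs_nonneg _) (hp i n)) ?_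
    · exact Finset.mem_range.mpr (mem_filter.mp hn).2
    · calc ∑ n ∈ (s i).filter (¬ · < N), |g n| * p i n
          ≤ ∑ n ∈ (s i).filter (¬ · < N), ε' * (n * p i n) :=
            sum_le_sum fun n hn => by
              have := hN n (not_lt.mp (mem_filter.mp hn).2)
              rw [Real.norm_eq_abs, Real.norm_natCast] at this
              nlinarith [hp i n]
        _ ≤ ∑ n ∈ s i, ε' * (n * p i n) :=
            sum_le_sum_of_subset_of_nonneg (filter_subset _ _)
              fun n _ _ => mul_nonneg hε'.le (mul_nonneg n.cast_nonneg (hp i n))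
  have hC' : ε' * ∑ n ∈ s i, n * p i n < ε / 2 :=
    calc ε' * ∑ n ∈ s i, n * p i n ≤ ε' * |C| :=
          mul_le_mul_of_nonneg_left ((hC i).trans (le_abs_self C)) hε'.le
      _ < ε' * (|C| + 1) := mul_lt_mul_of_pos_left (lt_add_one _) hε'
      _ = ε / 2 := by rw [hε'_def]; field_simp
  rw [Real.dist_eq, sub_zero]
  calc |∑ n ∈ s i, g n * p i n| ≤ ∑ n ∈ s i, |g n| * p i n :=
        (abs_sum_le_sum_abs _ _).trans_eq
          (sum_congr rfl fun n _ => by rw [abs_mul, abs_of_nonneg (hp i n)])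
    _ < ε := by linarith

lemma exists_pos_forall_le_of_tendsto {u : ℕ → ℝ} {a : ℝ} (hu : ∀ n, 0 < u n) (ha : 0 < a)
    (h : Tendsto u atTop (𝓝 a)) : ∃ δ > 0, ∀ n, δ ≤ u n := by
  obtain ⟨B, hB⟩ := (h.inv₀ ha.ne').bddAbove_range
  have hB' : ∀ n, (u n)⁻¹ ≤ B := fun n => hB ⟨n, rfl⟩
  have hBpos : 0 < B := (inv_pos.mpr (hu 0)).trans_le (hB' 0)
  exact ⟨B⁻¹, inv_pos.mpr hBpos, fun n => by simpa using inv_anti₀ (inv_pos.mpr (hu n)) (hB' n)⟩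

section Fibers

variable {Ω β : Type*} [MeasurableSpace Ω] [MeasurableSpace β] [Countable β]
  [MeasurableSingletonClass β] {μ : Measure Ω} {f : Ω → β}

lemma measure_eq_tsum_inter_preimage_singleton (hf : Measurable f) (s : Set Ω) :
    μ s = ∑' b, μ (s ∩ f ⁻¹' {b}) := by
  have h := tsum_measure_preimage_singleton (μ := μ.restrict s) countable_univ
    fun b _ => hf (measurableSet_singleton b)
  rw [preimage_univ, Measure.restrict_apply_univ,
    tsum_univ (f := fun b => μ.restrict s (f ⁻¹' {b}))] at h
  rw [← h]
  exact tsum_congr fun b => by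
    rw [Measure.restrict_apply (hf (measurableSet_singleton b)), inter_comm]

lemma measure_inter_eq_mul_of_forall_fiber (hf : Measurable f) {A B : Set Ω} {c : ENNReal}
    (h : ∀ b, μ (A ∩ B ∩ f ⁻¹' {b}) = c * μ (B ∩ f ⁻¹' {b})) : μ (A ∩ B) = c * μ B := by
  rw [measure_eq_tsum_inter_preimage_singleton hf (A ∩ B),
    measure_eq_tsum_inter_preimage_singleton hf B, ← ENNReal.tsum_mul_left]
  exact tsum_congr h

end Fibers

section Conditioning

variable {Ω : Type*} [MeasurableSpace Ω] {μ : Measure Ω} {A B D : Set Ω}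

lemma measure_inter_eq_of_cond_eq [IsFiniteMeasure μ] (hB : MeasurableSet B) {c : ENNReal}
    (h : μ B ≠ 0 → μ[A | B] = c) : μ (A ∩ B) = c * μ B := by
  rcases eq_or_ne (μ B) 0 with h0 | h0
  · rw [measure_inter_null_of_null_right _ h0, h0, mul_zero]
  · rw [← h h0, cond_mul_eq_inter hB, inter_comm]

lemma measure_inter_eq_zero_of_disjoint [IsFiniteMeasure μ] (hD : MeasurableSet D)
    (hDB : μ (D ∩ B) = μ B) (hAD : Disjoint A D) : μ (A ∩ B) = 0 := by
  have hdiff : μ (B \ D) = 0 := by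
    have h := measure_inter_add_sdiff (μ := μ) B hD
    rw [inter_comm, hDB] at h
    exact (ENNReal.add_right_inj (measure_ne_top μ B)).mp (h.trans (add_zero _).symm)
  exact measure_mono_null (fun ω hω => mem_sdiff_of_mem hω.2 (hAD.notMem_of_mem_left hω.1)) hdiff

end Conditioning

section Paths

variable {Ω : Type*} {X : ℕ → Ω → ℕ}

def pathCylinder (X : ℕ → Ω → ℕ) (m : ℕ) (path : ℕ → ℕ) : Set Ω :=
  ⋂ i ∈ Finset.range (m + 1), {ω | X i ω = path i}

def history (X : ℕ → Ω → ℕ) (m : ℕ) (ω : Ω) : Fin (m + 1) → ℕ := fun i => X i ω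

lemma measurable_history [MeasurableSpace Ω] (hX : ∀ i, Measurable (X i)) (m : ℕ) :
    Measurable (history X m) :=
  measurable_pi_lambda _ fun i => hX i

lemma measurableSet_pathCylinder [MeasurableSpace Ω] (hX : ∀ i, Measurable (X i)) (m : ℕ)
    (path : ℕ → ℕ) :
    MeasurableSet (pathCylinder X m path) :=
  Finset.measurableSet_biInter _ fun i _ => hX i (measurableSet_singleton (path i))

lemma history_preimage_singleton (X : ℕ → Ω → ℕ) (m : ℕ) (v : Fin (m + 1) → ℕ) :
    history X m ⁻¹' {v} = pathCylinder X m (Function.extend Fin.val v 0) := by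
  ext ω
  simp only [Set.mem_preimage, mem_singleton_iff, funext_iff, history, pathCylinder, mem_iInter,
    Finset.mem_range, mem_ofPred_eq]
  constructor
  · intro h i hi
    exact (h ⟨i, hi⟩).trans (Fin.val_injective.extend_apply v 0 ⟨i, hi⟩).symm
  · intro h i
    rw [h i i.2, Fin.val_injective.extend_apply]

end Paths

def bdKernel (r : ℕ → ℝ) : ℕ → ℕ → ℝ
  | 0, j => if j = 0 then 1 else 0
  | n + 1, j => if j = n + 2 then r (n + 1) else if j = n then 1 - r (n + 1) else 0

def bdMean (r : ℕ → ℝ) (w : ℕ → ℝ) : ℕ → ℝ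
  | 0 => w 0
  | n + 1 => (1 - r (n + 1)) * w n + r (n + 1) * w (n + 2)

section Kernel

variable {r : ℕ → ℝ}

lemma bdKernel_nonneg (hr : ∀ n, 1 ≤ n → r n ∈ Icc (0 : ℝ) 1) (n j : ℕ) :
    0 ≤ bdKernel r n j := by
  cases n with
  | zero => simp only [bdKernel]; split_ifs <;> norm_num
  | succ n =>
    obtain ⟨h0, h1⟩ := hr (n + 1) (by omega)
    simp only [bdKernel]; split_ifs <;> linarith

lemma bdKernel_eq_zero_of_succ_lt {n j : ℕ} (h : n + 1 < j) : bdKernel r n j = 0 := by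
  cases n <;> simp only [bdKernel] <;> split_ifs <;> first | rfl | omega

lemma sum_bdKernel_mul {n N : ℕ} (h : n + 1 < N) (w : ℕ → ℝ) :
    ∑ j ∈ range N, bdKernel r n j * w j = bdMean r w n := by
  cases n with
  | zero => simp [bdKernel, bdMean, show 0 < N by omega]
  | succ n =>
    rw [sum_eq_add n (n + 2) (by omega)]
    · simp [bdKernel, bdMean]
    · intro j _ hj; simp [bdKernel, hj.1, hj.2]
    · intro hn; simp only [Finset.mem_range, not_lt] at hn; omega
    · intro hn; simp only [Finset.mem_range, not_lt] at hn; omega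

end Kernel

/-- The forward equation for the law `δ_k Pᵐ` of the chain at time `m`; truncating the sum at
`k + m` loses nothing, as `bdLaw r k m` vanishes beyond `k + m` (`bdLaw_eq_zero_of_lt`). -/
def bdLaw (r : ℕ → ℝ) (k : ℕ) : ℕ → ℕ → ℝ
  | 0, n => if n = k then 1 else 0
  | m + 1, j => ∑ n ∈ range (k + m + 1), bdKernel r n j * bdLaw r k m n

def bdExpect (r : ℕ → ℝ) (k m : ℕ) (w : ℕ → ℝ) : ℝ :=
  ∑ n ∈ range (k + m + 1), w n * bdLaw r k m n

section Law

variable {r : ℕ → ℝ} {k : ℕ}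

lemma bdLaw_nonneg (hr : ∀ n, 1 ≤ n → r n ∈ Icc (0 : ℝ) 1) (m n : ℕ) : 0 ≤ bdLaw r k m n := by
  induction m generalizing n with
  | zero => simp only [bdLaw]; split_ifs <;> norm_num
  | succ m ih => exact sum_nonneg fun i _ => mul_nonneg (bdKernel_nonneg hr i n) (ih i)

lemma bdLaw_eq_zero_of_lt {m n : ℕ} (h : k + m < n) : bdLaw r k m n = 0 := by
  induction m generalizing n with
  | zero => simp only [bdLaw]; rw [if_neg (by omega)]
  | succ m ih =>
    refine sum_eq_zero fun i hi => ?_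
    rw [bdKernel_eq_zero_of_succ_lt (by simp only [Finset.mem_range] at hi; omega), zero_mul]

lemma bdExpect_zero (w : ℕ → ℝ) : bdExpect r k 0 w = w k := by
  simp [bdExpect, bdLaw]

lemma bdExpect_succ (m : ℕ) (w : ℕ → ℝ) :
    bdExpect r k (m + 1) w = bdExpect r k m (bdMean r w) := by
  simp only [bdExpect, bdLaw, mul_sum]
  rw [sum_comm]
  refine sum_congr rfl fun n hn => ?_
  have hN : n + 1 < k + (m + 1) + 1 := by simp only [Finset.mem_range] at hn; omega
  rw [← sum_bdKernel_mul hN w, sum_mul]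
  exact sum_congr rfl fun j _ => by ring

lemma bdExpect_indicator (m N : ℕ) :
    bdExpect r k m (fun n => if n = N then 1 else 0) = bdLaw r k m N := by
  simp only [bdExpect, ite_mul, one_mul, zero_mul, sum_ite_eq', Finset.mem_range]
  split_ifs with h
  · rfl
  · exact (bdLaw_eq_zero_of_lt (by omega)).symm

lemma bdExpect_mono (hr : ∀ n, 1 ≤ n → r n ∈ Icc (0 : ℝ) 1) {v w : ℕ → ℝ} (h : ∀ n, v n ≤ w n)
    (m : ℕ) : bdExpect r k m v ≤ bdExpect r k m w :=
  sum_le_sum fun n _ => mul_le_mul_of_nonneg_right (h n) (bdLaw_nonneg hr m n)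

lemma bdExpect_eq_of_bdMean_eq {w : ℕ → ℝ} (hw : bdMean r w = w) (m : ℕ) :
    bdExpect r k m w = w k := by
  induction m with
  | zero => exact bdExpect_zero w
  | succ m ih => rw [bdExpect_succ, hw, ih]

/-- A Lyapunov function that decreases by `c` at `N` forces the chain to spend finite expected
time at `N`. -/
lemma summable_bdLaw_of_bdMean_add_le (hr : ∀ n, 1 ≤ n → r n ∈ Icc (0 : ℝ) 1) {ψ : ℕ → ℝ}
    (hψ : ∀ n, 0 ≤ ψ n) {c : ℝ} (hc : 0 < c) {N : ℕ}
    (hP : ∀ n, bdMean r ψ n + c * (if n = N then 1 else 0) ≤ ψ n) :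
    Summable fun m => bdLaw r k m N := by
  have hdecr : ∀ m, bdExpect r k (m + 1) ψ + c * bdLaw r k m N ≤ bdExpect r k m ψ := fun m =>
    calc bdExpect r k (m + 1) ψ + c * bdLaw r k m N
        = bdExpect r k m (fun n => bdMean r ψ n + c * (if n = N then 1 else 0)) := by
          rw [bdExpect_succ, ← bdExpect_indicator, bdExpect, bdExpect, bdExpect, mul_sum,
            ← sum_add_distrib]
          exact sum_congr rfl fun n _ => by ring
      _ ≤ bdExpect r k m ψ := bdExpect_mono hr hP m
  have htotal : ∀ M, c * ∑ m ∈ range M, bdLaw r k m N + bdExpect r k M ψ ≤ ψ k := by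
    intro M
    induction M with
    | zero => simp [bdExpect_zero]
    | succ M ih => rw [sum_range_succ]; linarith [hdecr M]
  refine summable_of_sum_range_le (c := ψ k / c) (fun m => bdLaw_nonneg hr m N) fun M => ?_
  have hpos : 0 ≤ bdExpect r k M ψ := bdExpect_mono hr hψ M |>.trans' (by simp [bdExpect])
  rw [le_div_iff₀ hc]
  linarith [htotal M]

end Law

noncomputable def bdRatio (r : ℕ → ℝ) (n : ℕ) : ℝ := ∏ i ∈ Finset.Icc 1 n, (1 - r i) / r i

noncomputable def bdScale (r : ℕ → ℝ) (n : ℕ) : ℝ := ∑ j ∈ range n, bdRatio r j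

section Scale

variable {r : ℕ → ℝ}

lemma bdRatio_pos (hr : ∀ n, 1 ≤ n → r n ∈ Ioo (0 : ℝ) 1) (n : ℕ) : 0 < bdRatio r n :=
  prod_pos fun i hi => by
    obtain ⟨h0, h1⟩ := hr i (Finset.mem_Icc.mp hi).1
    exact div_pos (by linarith) h0

lemma mul_bdRatio_succ {n : ℕ} (hr : r (n + 1) ≠ 0) :
    r (n + 1) * bdRatio r (n + 1) = (1 - r (n + 1)) * bdRatio r n := by
  rw [bdRatio, bdRatio, prod_Icc_succ_top (by omega)]
  field_simp

lemma bdScale_succ (n : ℕ) : bdScale r (n + 1) = bdScale r n + bdRatio r n :=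
  sum_range_succ _ n

lemma bdMean_bdScale_succ {n : ℕ} (hr : r (n + 1) ≠ 0) :
    (1 - r (n + 1)) * bdScale r n + r (n + 1) * bdScale r (n + 2) = bdScale r (n + 1) := by
  rw [bdScale_succ (n + 1), bdScale_succ n]
  linear_combination mul_bdRatio_succ hr

lemma bdMean_bdScale (hr : ∀ n, 1 ≤ n → r n ≠ 0) : bdMean r (bdScale r) = bdScale r := by
  funext n
  cases n with
  | zero => rfl
  | succ n => exact bdMean_bdScale_succ (hr (n + 1) (by omega))

lemma bdMean_bdScale_min (hr : ∀ n, 1 ≤ n → r n ≠ 0) (N n : ℕ) :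
    bdMean r (fun i => bdScale r (min i (N + 1))) n
        + (1 - r (N + 1)) * bdRatio r N * (if n = N + 1 then 1 else 0)
      = bdScale r (min n (N + 1)) := by
  cases n with
  | zero => simp [bdMean]
  | succ n =>
    simp only [bdMean, add_left_inj]
    rcases lt_trichotomy n N with h | rfl | h
    · rw [if_neg (by omega), min_eq_left (by omega), min_eq_left (by omega),
        min_eq_left (by omega), mul_zero, add_zero]
      exact bdMean_bdScale_succ (hr (n + 1) (by omega))
    · rw [if_pos rfl, min_eq_left (by omega), min_eq_right (by omega), min_self, bdScale_succ]
      ring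
    · rw [if_neg (by omega), min_eq_right (by omega), min_eq_right (by omega),
        min_eq_right (by omega)]
      ring

lemma tendsto_bdLaw_zero (hr : ∀ n, 1 ≤ n → r n ∈ Ioo (0 : ℝ) 1) (k : ℕ) {N : ℕ} (hN : 1 ≤ N) :
    Tendsto (fun m => bdLaw r k m N) atTop (𝓝 0) := by
  obtain ⟨N, rfl⟩ : ∃ N', N = N' + 1 := ⟨N - 1, by omega⟩
  have hr' : ∀ n, 1 ≤ n → r n ≠ 0 := fun n hn => (hr n hn).1.ne'
  refine (summable_bdLaw_of_bdMean_add_le (fun n hn => Ioo_subset_Icc_self (hr n hn))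
    (ψ := fun i => bdScale r (min i (N + 1))) (fun n => ?_) ?_
    fun n => (bdMean_bdScale_min hr' N n).le).tendsto_atTop_zero
  · exact sum_nonneg fun j _ => (bdRatio_pos hr j).le
  · exact mul_pos (by linarith [(hr (N + 1) (by omega)).2]) (bdRatio_pos hr N)

end Scale

section Limit

variable {r : ℕ → ℝ} {tinf : ℝ}

lemma isLittleO_sub_bdScale_div (htinf : 0 < tinf) (hlim : Tendsto (bdRatio r) atTop (𝓝 tinf)) :
    (fun n : ℕ => n - bdScale r n / tinf) =o[atTop] fun n => (n : ℝ) := by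
  have hsum : ∀ n : ℕ, n - bdScale r n / tinf = ∑ j ∈ range n, (1 - bdRatio r j / tinf) := by
    intro n
    simp [bdScale, sum_sub_distrib, sum_div]
  rw [isLittleO_iff_tendsto fun n hn => by simp [Nat.cast_eq_zero.mp hn, bdScale]]
  have hcesaro := (tendsto_const_nhds.sub (hlim.div_const tinf)).cesaro
    (u := fun j => 1 - bdRatio r j / tinf)
  rw [div_self htinf.ne', sub_self] at hcesaro
  refine hcesaro.congr fun n => ?_
  rw [hsum, div_eq_inv_mul]

lemma bdExpect_id_le_of_le_bdRatio (hr : ∀ n, 1 ≤ n → r n ∈ Ioo (0 : ℝ) 1) (k : ℕ) {δ : ℝ}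
    (hδ : 0 < δ) (hδr : ∀ n, δ ≤ bdRatio r n) (m : ℕ) :
    bdExpect r k m (fun n => n) ≤ bdScale r k / δ := by
  have hle : ∀ n : ℕ, (n : ℝ) ≤ bdScale r n / δ := fun n => by
    rw [le_div_iff₀ hδ]
    simpa [bdScale] using card_nsmul_le_sum (range n) (bdRatio r) δ fun j _ => hδr j
  calc bdExpect r k m (fun n => n) ≤ bdExpect r k m (fun n => bdScale r n / δ) :=
        bdExpect_mono (fun n hn => Ioo_subset_Icc_self (hr n hn)) hle m
    _ = bdExpect r k m (bdScale r) / δ := by simp only [bdExpect, sum_div, div_mul_eq_mul_div]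
    _ = bdScale r k / δ := by
        rw [bdExpect_eq_of_bdMean_eq (bdMean_bdScale fun n hn => (hr n hn).1.ne')]

lemma tendsto_bdExpect_id (hr : ∀ n, 1 ≤ n → r n ∈ Ioo (0 : ℝ) 1) (k : ℕ) (htinf : 0 < tinf)
    (hlim : Tendsto (bdRatio r) atTop (𝓝 tinf)) :
    Tendsto (fun m => bdExpect r k m (fun n => n)) atTop (𝓝 (bdScale r k / tinf)) := by
  obtain ⟨δ, hδ, hδr⟩ := exists_pos_forall_le_of_tendsto (bdRatio_pos hr) htinf hlim
  have hsplit : ∀ m, bdExpect r k m (fun n => n)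
      = bdExpect r k m (fun n => n - bdScale r n / tinf) + bdScale r k / tinf := fun m => by
    rw [← bdExpect_eq_of_bdMean_eq (bdMean_bdScale fun n hn => (hr n hn).1.ne') m]
    simp only [bdExpect, sub_mul, sum_sub_distrib, sum_div, div_mul_eq_mul_div]
    ring
  have hg := tendsto_sum_mul_of_isLittleO (bdLaw_nonneg fun n hn => Ioo_subset_Icc_self (hr n hn))
    (fun n hn => tendsto_bdLaw_zero hr k hn) (bdExpect_id_le_of_le_bdRatio hr k hδ hδr)
    (by simp [bdScale]) (isLittleO_sub_bdScale_div htinf hlim)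
  rw [← zero_add (bdScale r k / tinf)]
  exact (hg.add_const _).congr fun m => (hsplit m).symm

end Limit

namespace IsBirthDeathChain

variable {Ω : Type*} [MeasurableSpace Ω] {μ : Measure Ω} {X : ℕ → Ω → ℕ} {r : ℕ → ℝ} {k : ℕ}

lemma measure_succ_inter_pathCylinder (hX : IsBirthDeathChain μ X r k)
    (hr : ∀ n, 1 ≤ n → r n ∈ Icc (0 : ℝ) 1) (m j : ℕ) (path : ℕ → ℕ) :
    μ ({ω | X (m + 1) ω = j} ∩ pathCylinder X m path)
      = ENNReal.ofReal (bdKernel r (path m) j) * μ (pathCylinder X m path) := by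
  have := hX.isProb
  have hC := measurableSet_pathCylinder hX.meas m path
  have hlevel : ∀ i, MeasurableSet {ω | X (m + 1) ω = i} :=
    fun i => hX.meas (m + 1) (measurableSet_singleton i)
  generalize hpath : path m = n
  cases n with
  | zero =>
    have h0 := measure_inter_eq_of_cond_eq hC (hX.absorb m path hpath)
    rw [one_mul] at h0
    by_cases hj : j = 0
    · simp [bdKernel, hj, h0]
    · rw [show bdKernel r 0 j = 0 from if_neg hj, ENNReal.ofReal_zero, zero_mul]
      exact measure_inter_eq_zero_of_disjoint (hlevel 0) h0
        (disjoint_left.mpr fun ω h1 h2 => hj (h1.symm.trans h2))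
  | succ n =>
    have hup := measure_inter_eq_of_cond_eq hC (hX.step_up m path (by omega))
    have hdown := measure_inter_eq_of_cond_eq hC (hX.step_down m path (by omega))
    rw [hpath] at hup hdown
    rw [Nat.add_sub_cancel] at hdown
    obtain ⟨hr0, hr1⟩ := hr (n + 1) (by omega)
    by_cases hj₁ : j = n + 2
    · subst hj₁; simpa [bdKernel] using hup
    by_cases hj₂ : j = n
    · subst hj₂; simpa [bdKernel] using hdown
    rw [show bdKernel r (n + 1) j = 0 by simp [bdKernel, hj₁, hj₂], ENNReal.ofReal_zero, zero_mul]
    -- the steps up and down already carry the whole mass of the cylinder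
    refine measure_inter_eq_zero_of_disjoint ((hlevel (n + 2)).union (hlevel n)) ?_
      (disjoint_left.mpr fun ω h1 h2 => ?_)
    · rw [union_inter_distrib_right, measure_union _ ((hlevel n).inter hC), hup, hdown, ← add_mul,
        ← ENNReal.ofReal_add hr0 (by linarith), add_sub_cancel, ENNReal.ofReal_one, one_mul]
      exact disjoint_left.mpr fun ω h1 h2 => by
        have := h1.1.symm.trans h2.1
        omega
    · rcases h2 with h2 | h2
      · exact hj₁ (h1.symm.trans h2)
      · exact hj₂ (h1.symm.trans h2)

lemma measure_succ_inter (hX : IsBirthDeathChain μ X r k) (hr : ∀ n, 1 ≤ n → r n ∈ Icc (0 : ℝ) 1)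
    (m j n : ℕ) :
    μ ({ω | X (m + 1) ω = j} ∩ {ω | X m ω = n})
      = ENNReal.ofReal (bdKernel r n j) * μ {ω | X m ω = n} := by
  refine measure_inter_eq_mul_of_forall_fiber (measurable_history hX.meas m) fun v => ?_
  by_cases hv : v (Fin.last m) = n
  · have hsub : history X m ⁻¹' {v} ⊆ {ω | X m ω = n} := fun ω hω => by
      rw [← hv, ← hω]; rfl
    have hlast : Function.extend Fin.val v 0 m = v (Fin.last m) :=
      Fin.val_injective.extend_apply v 0 (Fin.last m)
    rw [Set.inter_assoc, inter_eq_right.mpr hsub, ← hv, history_preimage_singleton,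
      measure_succ_inter_pathCylinder hX hr, hlast]
  · have hempty : {ω | X m ω = n} ∩ history X m ⁻¹' {v} = ∅ :=
      eq_empty_of_forall_notMem fun ω hω => hv (by rw [← (hω.2 : history X m ω = v)]; exact hω.1)
    rw [Set.inter_assoc, hempty, Set.inter_empty, measure_empty, mul_zero]

lemma measure_eq_ofReal_bdLaw (hX : IsBirthDeathChain μ X r k)
    (hr : ∀ n, 1 ≤ n → r n ∈ Icc (0 : ℝ) 1) (m n : ℕ) :
    μ {ω | X m ω = n} = ENNReal.ofReal (bdLaw r k m n) := by
  have := hX.isProb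
  induction m generalizing n with
  | zero =>
    have hstart : μ {ω | X 0 ω ≠ k} = 0 := ae_iff.mp hX.start
    by_cases hn : n = k
    · subst hn
      rw [show bdLaw r n 0 n = 1 from if_pos rfl, ENNReal.ofReal_one]
      exact (prob_compl_eq_zero_iff (hX.meas 0 (measurableSet_singleton n))).mp hstart
    · rw [show bdLaw r k 0 n = 0 from if_neg hn, ENNReal.ofReal_zero]
      exact measure_mono_null (fun ω (hω : X 0 ω = n) => (hω.trans_ne hn : X 0 ω ≠ k)) hstart
  | succ m ih =>
    calc μ {ω | X (m + 1) ω = n}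
        = ∑' i, μ ({ω | X (m + 1) ω = n} ∩ {ω | X m ω = i}) :=
          measure_eq_tsum_inter_preimage_singleton (hX.meas m) _
      _ = ∑' i, ENNReal.ofReal (bdKernel r i n * bdLaw r k m i) := tsum_congr fun i => by
          rw [measure_succ_inter hX hr, ih, ENNReal.ofReal_mul (bdKernel_nonneg hr i n)]
      _ = ∑ i ∈ Finset.range (k + m + 1), ENNReal.ofReal (bdKernel r i n * bdLaw r k m i) :=
          tsum_eq_sum fun i hi => by
            rw [bdLaw_eq_zero_of_lt (by simpa using hi), mul_zero, ENNReal.ofReal_zero]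
      _ = ENNReal.ofReal (bdLaw r k (m + 1) n) :=
          (ENNReal.ofReal_sum_of_nonneg fun i _ =>
            mul_nonneg (bdKernel_nonneg hr i n) (bdLaw_nonneg hr m i)).symm

lemma integral_eq_bdExpect (hX : IsBirthDeathChain μ X r k)
    (hr : ∀ n, 1 ≤ n → r n ∈ Icc (0 : ℝ) 1) (m : ℕ) :
    ∫ ω, (X m ω : ℝ) ∂μ = bdExpect r k m (fun n => n) := by
  have := hX.isProb
  have hlevel : ∀ n, MeasurableSet {ω | X m ω = n} :=
    fun n => hX.meas m (measurableSet_singleton n)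
  have hnull : μ (X m ⁻¹' {n | k + m < n}) = 0 :=
    (measure_preimage_eq_zero_iff_of_countable (to_countable _)).mpr fun n hn => by
      rw [← ENNReal.ofReal_zero, ← bdLaw_eq_zero_of_lt (r := r) hn]
      exact measure_eq_ofReal_bdLaw hX hr m n
  have hbound : ∀ᵐ ω ∂μ, X m ω < k + m + 1 :=
    measure_mono_null (fun ω hω => show k + m < X m ω by simpa using hω) hnull
  have hsum : (fun ω => (X m ω : ℝ)) =ᵐ[μ]
      fun ω => ∑ n ∈ Finset.range (k + m + 1), {ω | X m ω = n}.indicator (fun _ => (n : ℝ)) ω := by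
    filter_upwards [hbound] with ω hω
    simp [indicator_apply, hω]
  rw [integral_congr_ae hsum,
    integral_finsetSum _ fun n _ => (integrable_const _).indicator (hlevel n)]
  refine Finset.sum_congr rfl fun n _ => ?_
  rw [integral_indicator_const _ (hlevel n), smul_eq_mul, mul_comm, measureReal_def,
    measure_eq_ofReal_bdLaw hX hr, ENNReal.toReal_ofReal (bdLaw_nonneg hr m n)]

end IsBirthDeathChain

theorem expected_value_tendsto_general {Ω : Type*} [MeasurableSpace Ω] (μ : Measure Ω)
    (X : ℕ → Ω → ℕ) (r : ℕ → ℝ) (k : ℕ)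
    (hr : ∀ n, 1 ≤ n → r n ∈ Set.Ioo (0 : ℝ) 1)
    (hX : IsBirthDeathChain μ X r k)
    (t : ℕ → ℝ) (ht : ∀ n, t n = ∏ i ∈ Finset.Icc 1 n, ((1 - r i) / r i))
    (tinf : ℝ) (htinf : 0 < tinf) (hlim : Tendsto t atTop (nhds tinf)) :
    Tendsto (fun m => ∫ ω, (X m ω : ℝ) ∂μ) atTop
      (nhds ((∑ j ∈ Finset.range k, t j) / tinf)) := by
  obtain rfl : t = bdRatio r := funext ht
  exact (tendsto_bdExpect_id hr k htinf hlim).congr fun m =>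
    (hX.integral_eq_bdExpect (fun n hn => Ioo_subset_Icc_self (hr n hn)) m).symm

/-- If `tₙ = (l₁⋯lₙ)/(r₁⋯rₙ)` converges to a finite positive limit `t_∞`, then the expected
value of the chain converges to `(∑_{j=0}^{k−1} tⱼ)/t_∞`. -/
theorem expected_value_tendsto {Ω : Type*} [MeasurableSpace Ω] (μ : Measure Ω)
    (X : ℕ → Ω → ℕ) (r : ℕ → ℝ) (k : ℕ) (hk : 1 ≤ k)
    (hr : ∀ n, 1 ≤ n → r n ∈ Set.Ioo (0 : ℝ) 1)
    (hX : IsBirthDeathChain μ X r k)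
    (t : ℕ → ℝ) (ht : ∀ n, t n = ∏ i ∈ Finset.Icc 1 n, ((1 - r i) / r i))
    (tinf : ℝ) (htinf : 0 < tinf) (hlim : Tendsto t atTop (nhds tinf)) :
    Tendsto (fun m => ∫ ω, (X m ω : ℝ) ∂μ) atTop
      (nhds ((∑ j ∈ Finset.range k, t j) / tinf)) :=
  expected_value_tendsto_general μ X r k hr hX t ht tinf htinf hlim
end

section
/- Let (X_m) be the birth-death chain on ℕ started at k ≥ 1 with l_n = n/(2n+1), r_n = (n+1)/(2n+1) for n ≥ 1 and 0 absorbing. Then the chain reaches 0 with probability 1, yet E[X_m] → ∞ as m → ∞. -/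
/-!
The harmonic numbers `H n` satisfy `r n * H (n + 1) + (1 - r n) * H (n - 1) = H n` for `n ≥ 1`
and `H 0 = 0`, so `E[H (X m)] = H k` for every `m`. Since
`P(X (m + 1) = 0) ≥ P(X m = 0) + l₁ P(X m = 1)` and `P(X (m + 1) = n) ≥ lₙ₊₁ P(X m = n + 1)`,
each sequence `m ↦ P(X m = n)` with `n ≥ 1` is summable, so `P(1 ≤ X m < N) → 0`. Markov's
inequality gives `P(X m ≥ N) ≤ H k / H N`, hence `P(X m = 0) → 1`. On the other hand `n / H n`
is nondecreasing, so `E[X m] ≥ (N / H N) E[H (X m); X m ≥ N]`, which tends to `N H k / H N`;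
this is unbounded in `N` because `H N ≤ 2 √N`.
-/

open MeasureTheory ProbabilityTheory Filter Set

open scoped Topology

section NatValued

variable {Ω : Type*} [MeasurableSpace Ω] {μ : Measure Ω} {Y : Ω → ℕ}

lemma measure_fiber_eq_zero_of_sum_eq_one [IsProbabilityMeasure μ] (hY : Measurable Y)
    {T : Finset ℕ} (hT : ∑ j ∈ T, μ {ω | Y ω = j} = 1) {j : ℕ} (hj : j ∉ T) :
    μ {ω | Y ω = j} = 0 := by
  have hfull : μ (Y ⁻¹' (T : Set ℕ)) = 1 := by
    rw [← sum_measure_preimage_singleton T fun j _ => hY (measurableSet_singleton j)]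
    exact hT
  refine measure_mono_null (fun ω (hω : Y ω = j) => ?_)
    ((prob_compl_eq_zero_iff (hY T.measurableSet)).2 hfull)
  simpa [hω] using hj

lemma measureReal_eq_sum_inter_of_ae_lt [IsFiniteMeasure μ] (hY : Measurable Y) {B : ℕ}
    (hB : ∀ᵐ ω ∂μ, Y ω < B) {t : Set Ω} (ht : MeasurableSet t) :
    μ.real t = ∑ n ∈ Finset.range B, μ.real ({ω | Y ω = n} ∩ t) := by
  have hfib : ∀ n, MeasurableSet {ω | Y ω = n} := fun n => hY (measurableSet_singleton n)
  rw [← measureReal_biUnion_finset (fun a _ b _ hab => ?_) fun n _ => (hfib n).inter ht,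
    ← Set.iUnion₂_inter]
  · refine (measureReal_congr ?_).symm
    filter_upwards [hB] with ω hω
    exact propext ⟨And.right, fun h => ⟨Set.mem_biUnion (Finset.mem_range.2 hω) rfl, h⟩⟩
  · exact Set.disjoint_left.2 fun ω h₁ h₂ => hab (h₁.1.symm.trans h₂.1)

lemma integral_comp_eq_sum_of_ae_lt [IsFiniteMeasure μ] (hY : Measurable Y) {B : ℕ}
    (hB : ∀ᵐ ω ∂μ, Y ω < B) (f : ℕ → ℝ) :
    ∫ ω, f (Y ω) ∂μ = ∑ n ∈ Finset.range B, f n * μ.real {ω | Y ω = n} := by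
  have hfib : ∀ n, MeasurableSet {ω | Y ω = n} := fun n => hY (measurableSet_singleton n)
  have hsum : (fun ω => f (Y ω)) =ᵐ[μ]
      fun ω => ∑ n ∈ Finset.range B, {ω | Y ω = n}.indicator (fun _ => f n) ω := by
    filter_upwards [hB] with ω hω
    rw [Finset.sum_eq_single_of_mem (Y ω) (Finset.mem_range.2 hω)
      fun n _ hn => Set.indicator_of_notMem (s := {ω | Y ω = n}) (Ne.symm hn) _]
    exact (Set.indicator_of_mem (s := {ω | Y ω = Y ω}) rfl (fun _ => f (Y ω))).symm
  rw [integral_congr_ae hsum, integral_finsetSum _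
    fun n _ => (integrable_const (f n)).indicator (hfib n)]
  refine Finset.sum_congr rfl fun n _ => ?_
  rw [integral_indicator_const _ (hfib n), smul_eq_mul, mul_comm]

end NatValued

section Kernel

variable {r : ℕ → ℝ}

def birthDeathKernel (r : ℕ → ℝ) (n j : ℕ) : ℝ :=
  if n = 0 then if j = 0 then 1 else 0
  else if j = n + 1 then r n else if j = n - 1 then 1 - r n else 0

def birthDeathOperator (r : ℕ → ℝ) (f : ℕ → ℝ) (n : ℕ) : ℝ :=
  if n = 0 then f 0 else r n * f (n + 1) + (1 - r n) * f (n - 1)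

lemma birthDeathKernel_nonneg (hr : ∀ n, 0 < n → r n ∈ Icc 0 1) (n j : ℕ) :
    0 ≤ birthDeathKernel r n j := by
  unfold birthDeathKernel
  by_cases h0 : n = 0
  · split_ifs <;> norm_num
  · have hrn := hr n (Nat.pos_of_ne_zero h0)
    split_ifs <;> linarith [hrn.1, hrn.2]

lemma birthDeathKernel_eq_zero_of_lt {n j : ℕ} (h : n + 1 < j) :
    birthDeathKernel r n j = 0 := by
  unfold birthDeathKernel
  split_ifs <;> first | rfl | omega

lemma sum_birthDeathKernel_mul {n B : ℕ} (hn : n + 1 < B) (f : ℕ → ℝ) :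
    ∑ j ∈ Finset.range B, birthDeathKernel r n j * f j = birthDeathOperator r f n := by
  have hmem : ∀ {j}, j ≤ n + 1 → j ∈ Finset.range B :=
    fun h => Finset.mem_range.2 (by omega)
  by_cases h0 : n = 0
  · simp [birthDeathKernel, birthDeathOperator, h0, hmem (j := 0) (Nat.zero_le _)]
  · have hsplit : ∀ j, birthDeathKernel r n j * f j =
        (if n + 1 = j then r n * f j else 0) + (if n - 1 = j then (1 - r n) * f j else 0) := by
      intro j
      unfold birthDeathKernel
      split_ifs <;> first | omega | ring
    rw [Finset.sum_congr rfl fun j _ => hsplit j, Finset.sum_add_distrib, Finset.sum_ite_eq,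
      Finset.sum_ite_eq, if_pos (hmem le_rfl), if_pos (hmem (by omega))]
    simp [birthDeathOperator, h0]

end Kernel

section Harmonic

lemma monotone_harmonic_real : Monotone fun n => (harmonic n : ℝ) :=
  Rat.cast_mono.comp <| monotone_nat_of_le_succ fun n => by
    rw [harmonic_succ]
    exact le_add_of_nonneg_right (by positivity)

lemma one_le_harmonic_real {n : ℕ} (hn : 1 ≤ n) : (1 : ℝ) ≤ harmonic n := by
  simpa [harmonic] using monotone_harmonic_real hn

lemma tendsto_harmonic_real_atTop : Tendsto (fun n => (harmonic n : ℝ)) atTop atTop :=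
  tendsto_atTop_mono log_add_one_le_harmonic <| Real.tendsto_log_atTop.comp <|
    tendsto_natCast_atTop_atTop.comp (tendsto_add_atTop_nat 1)

lemma harmonic_le_two_mul_sqrt {n : ℕ} (hn : 1 ≤ n) : (harmonic n : ℝ) ≤ 2 * √n := by
  have hsqrt : 0 < √(n : ℝ) := Real.sqrt_pos.2 (by exact_mod_cast hn)
  have hlog : Real.log n = 2 * Real.log √n := by
    rw [Real.log_sqrt (by positivity)]
    ring
  linarith [harmonic_le_one_add_log n, Real.log_le_sub_one_of_pos hsqrt]

lemma tendsto_natCast_div_harmonic_atTop :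
    Tendsto (fun n : ℕ => (n : ℝ) / harmonic n) atTop atTop := by
  refine tendsto_atTop_mono' atTop ?_ <|
    (Real.tendsto_sqrt_atTop.comp tendsto_natCast_atTop_atTop).atTop_div_const two_pos
  filter_upwards [eventually_ge_atTop 1] with n hn
  have hH := one_le_harmonic_real hn
  have hsqrt := Real.mul_self_sqrt (Nat.cast_nonneg (α := ℝ) n)
  rw [Function.comp_apply, div_le_div_iff₀ two_pos (by linarith)]
  nlinarith [harmonic_le_two_mul_sqrt hn, Real.sqrt_nonneg n]

lemma natCast_mul_harmonic_le {N n : ℕ} (hN : 1 ≤ N) (h : N ≤ n) :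
    (N : ℝ) * harmonic n ≤ n * harmonic N := by
  induction n, h using Nat.le_induction with
  | base => exact le_rfl
  | succ n hn ih =>
    have hstep : (N : ℝ) / (n + 1) ≤ harmonic N :=
      (div_le_one_of_le₀ (by exact_mod_cast Nat.le_succ_of_le hn) (by positivity)).trans
        (one_le_harmonic_real hN)
    rw [harmonic_succ]
    push_cast
    rw [mul_add, ← div_eq_mul_inv]
    linarith

lemma birthDeathOperator_harmonic {r : ℕ → ℝ}
    (hr : ∀ n, 1 ≤ n → r n = (n + 1) / (2 * n + 1)) :
    birthDeathOperator r (fun n => (harmonic n : ℝ)) = fun n => (harmonic n : ℝ) := by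
  funext n
  rcases n with _ | n
  · simp [birthDeathOperator]
  · rw [birthDeathOperator, if_neg n.succ_ne_zero, hr _ n.succ_pos, harmonic_succ,
      harmonic_succ]
    push_cast
    field_simp
    ring

lemma mem_Ico_of_eq_div {r : ℕ → ℝ} (hr : ∀ n, 1 ≤ n → r n = (n + 1) / (2 * n + 1)) :
    ∀ n, 0 < n → r n ∈ Ico 0 1 := by
  intro n hn
  have hn' : (1 : ℝ) ≤ n := by exact_mod_cast hn
  rw [hr n hn, mem_Ico, div_lt_one (by positivity)]
  exact ⟨by positivity, by linarith⟩

lemma mem_Icc_of_eq_div {r : ℕ → ℝ} (hr : ∀ n, 1 ≤ n → r n = (n + 1) / (2 * n + 1)) :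
    ∀ n, 0 < n → r n ∈ Icc 0 1 :=
  fun n hn => Ico_subset_Icc_self (mem_Ico_of_eq_div hr n hn)

end Harmonic

namespace IsBirthDeathChain

variable {Ω : Type*} [MeasurableSpace Ω] {μ : Measure Ω} {X : ℕ → Ω → ℕ} {r : ℕ → ℝ}
  {k : ℕ}

lemma cond_preimage_history (hX : IsBirthDeathChain μ X r k)
    (hr : ∀ n, 0 < n → r n ∈ Icc 0 1) {m : ℕ} {v : Fin (m + 1) → ℕ}
    (hv : μ ((fun ω (i : Fin (m + 1)) => X i ω) ⁻¹' {v}) ≠ 0) (j : ℕ) :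
    μ[{ω | X (m + 1) ω = j} | (fun ω (i : Fin (m + 1)) => X i ω) ⁻¹' {v}]
      = ENNReal.ofReal (birthDeathKernel r (v (Fin.last m)) j) := by
  set path : ℕ → ℕ := fun i => if h : i < m + 1 then v ⟨i, h⟩ else 0
  have hcyl : (fun ω (i : Fin (m + 1)) => X i ω) ⁻¹' {v}
      = ⋂ i ∈ Finset.range (m + 1), {ω | X i ω = path i} := by
    ext ω
    simp only [path, mem_preimage, mem_singleton_iff, funext_iff, Fin.forall_iff, mem_iInter,
      Finset.mem_range, mem_ofPred_eq]
    exact forall₂_congr fun i hi => by rw [dif_pos hi]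
  have hlast : path m = v (Fin.last m) := by simp [path, Fin.last]
  rw [hcyl] at hv ⊢
  rw [← hlast]
  have := hX.isProb
  have := cond_isProbabilityMeasure hv
  have hmeas := hX.meas (m + 1)
  by_cases h0 : path m = 0
  · have habs := hX.absorb m path h0 hv
    by_cases hj : j = 0
    · rw [hj, habs]
      simp [birthDeathKernel, h0]
    · rw [measure_fiber_eq_zero_of_sum_eq_one hmeas (T := {0}) (by simpa using habs)
        (by simpa using hj)]
      simp [birthDeathKernel, h0, hj]
  · have hpos := Nat.pos_of_ne_zero h0
    have hup := hX.step_up m path hpos hv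
    have hdown := hX.step_down m path hpos hv
    have hrn := hr _ hpos
    by_cases hj₁ : j = path m + 1
    · rw [hj₁, hup]
      simp [birthDeathKernel, h0]
    by_cases hj₂ : j = path m - 1
    · rw [hj₂, hdown]
      simp [birthDeathKernel, h0, show path m - 1 ≠ path m + 1 by omega]
    have hT : ∑ j ∈ {path m + 1, path m - 1}, μ[{ω | X (m + 1) ω = j} |
        ⋂ i ∈ Finset.range (m + 1), {ω | X i ω = path i}] = 1 := by
      rw [Finset.sum_pair (by omega), hup, hdown,
        ← ENNReal.ofReal_add hrn.1 (by linarith [hrn.2])]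
      simp
    rw [measure_fiber_eq_zero_of_sum_eq_one hmeas hT (by simp [hj₁, hj₂])]
    simp [birthDeathKernel, h0, hj₁, hj₂]

lemma measure_inter_succ_eq (hX : IsBirthDeathChain μ X r k)
    (hr : ∀ n, 0 < n → r n ∈ Icc 0 1) (m n j : ℕ) :
    μ ({ω | X m ω = n} ∩ {ω | X (m + 1) ω = j})
      = ENNReal.ofReal (birthDeathKernel r n j) * μ {ω | X m ω = n} := by
  have := hX.isProb
  set H : Ω → Fin (m + 1) → ℕ := fun ω i => X i ω
  have hH : Measurable H := measurable_pi_lambda _ fun i => hX.meas i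
  set S : Set (Fin (m + 1) → ℕ) := {v | v (Fin.last m) = n}
  have hS : H ⁻¹' S = {ω | X m ω = n} := rfl
  have hfib : ∀ v ∈ S, MeasurableSet (H ⁻¹' {v}) := fun v _ => hH (measurableSet_singleton v)
  have hfiber : ∀ v ∈ S, μ (H ⁻¹' {v} ∩ {ω | X (m + 1) ω = j})
      = ENNReal.ofReal (birthDeathKernel r n j) * μ (H ⁻¹' {v}) := by
    intro v hv
    by_cases h0 : μ (H ⁻¹' {v}) = 0
    · rw [h0, mul_zero]
      exact measure_inter_null_of_null_left _ h0
    · rw [← cond_mul_eq_inter (hfib v hv), cond_preimage_history hX hr h0, hv]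
  rw [← hS, ← Measure.restrict_apply (hH (MeasurableSet.of_discrete)),
    ← tsum_measure_preimage_singleton S.to_countable hfib,
    ← tsum_measure_preimage_singleton S.to_countable hfib, ← ENNReal.tsum_mul_left]
  refine tsum_congr fun v => ?_
  rw [Measure.restrict_apply (hfib v v.2), hfiber v v.2]

lemma measureReal_inter_succ_eq (hX : IsBirthDeathChain μ X r k)
    (hr : ∀ n, 0 < n → r n ∈ Icc 0 1) (m n j : ℕ) :
    μ.real ({ω | X m ω = n} ∩ {ω | X (m + 1) ω = j})
      = birthDeathKernel r n j * μ.real {ω | X m ω = n} := by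
  simp only [measureReal_def, measure_inter_succ_eq hX hr, ENNReal.toReal_mul,
    ENNReal.toReal_ofReal (birthDeathKernel_nonneg hr n j)]

lemma measureReal_succ_eq_sum (hX : IsBirthDeathChain μ X r k)
    (hr : ∀ n, 0 < n → r n ∈ Icc 0 1) {m B : ℕ} (hB : ∀ᵐ ω ∂μ, X m ω < B)
    (j : ℕ) :
    μ.real {ω | X (m + 1) ω = j}
      = ∑ n ∈ Finset.range B, birthDeathKernel r n j * μ.real {ω | X m ω = n} := by
  have := hX.isProb
  rw [measureReal_eq_sum_inter_of_ae_lt (hX.meas m) hB (t := {ω | X (m + 1) ω = j})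
    (hX.meas _ (measurableSet_singleton j))]
  simp only [measureReal_inter_succ_eq hX hr]

lemma ae_le_add_time (hX : IsBirthDeathChain μ X r k) (hr : ∀ n, 0 < n → r n ∈ Icc 0 1)
    (m : ℕ) :
    ∀ᵐ ω ∂μ, X m ω ≤ k + m := by
  have := hX.isProb
  induction m with
  | zero => exact hX.start.mono fun ω h => h.le
  | succ m ih =>
    have hlt : ∀ᵐ ω ∂μ, X m ω < k + m + 1 := ih.mono fun ω h => Nat.lt_succ_of_le h
    have hset : {ω | ¬X (m + 1) ω ≤ k + (m + 1)} = X (m + 1) ⁻¹' Ioi (k + (m + 1)) := by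
      ext; simp
    rw [ae_iff, hset, measure_preimage_eq_zero_iff_of_countable (Set.to_countable _)]
    intro j hj
    rw [← measureReal_eq_zero_iff]
    change μ.real {ω | X (m + 1) ω = j} = 0
    rw [measureReal_succ_eq_sum hX hr hlt]
    refine Finset.sum_eq_zero fun n hn => ?_
    rw [birthDeathKernel_eq_zero_of_lt, zero_mul]
    simp only [Finset.mem_range, mem_Ioi] at hn hj
    omega

lemma integral_comp_succ (hX : IsBirthDeathChain μ X r k) (hr : ∀ n, 0 < n → r n ∈ Icc 0 1)
    (m : ℕ) (f : ℕ → ℝ) :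
    ∫ ω, f (X (m + 1) ω) ∂μ = ∫ ω, birthDeathOperator r f (X m ω) ∂μ := by
  have := hX.isProb
  have hlt : ∀ m, ∀ᵐ ω ∂μ, X m ω < k + m + 1 :=
    fun m => (ae_le_add_time hX hr m).mono fun ω h => Nat.lt_succ_of_le h
  rw [integral_comp_eq_sum_of_ae_lt (hX.meas _) (hlt (m + 1)),
    integral_comp_eq_sum_of_ae_lt (hX.meas _) (hlt m)]
  simp_rw [measureReal_succ_eq_sum hX hr (hlt m), Finset.mul_sum]
  rw [Finset.sum_comm]
  refine Finset.sum_congr rfl fun n hn => ?_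
  rw [← sum_birthDeathKernel_mul (B := k + (m + 1) + 1) (by simp at hn; omega),
    Finset.sum_mul]
  exact Finset.sum_congr rfl fun j _ => by ring

lemma integral_comp_eq_of_birthDeathOperator_eq (hX : IsBirthDeathChain μ X r k)
    (hr : ∀ n, 0 < n → r n ∈ Icc 0 1) {f : ℕ → ℝ} (hf : birthDeathOperator r f = f)
    (m : ℕ) :
    ∫ ω, f (X m ω) ∂μ = f k := by
  have := hX.isProb
  induction m with
  | zero =>
    rw [integral_congr_ae (hX.start.mono fun ω h => congrArg f h)]
    simp
  | succ m ih => rw [integral_comp_succ hX hr, hf, ih]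

lemma birthDeathKernel_mul_le_measureReal_succ (hX : IsBirthDeathChain μ X r k)
    (hr : ∀ n, 0 < n → r n ∈ Icc 0 1) (m n j : ℕ) :
    birthDeathKernel r n j * μ.real {ω | X m ω = n} ≤ μ.real {ω | X (m + 1) ω = j} := by
  have := hX.isProb
  rw [← measureReal_inter_succ_eq hX hr]
  exact measureReal_mono inter_subset_right

lemma measureReal_zero_add_le_succ (hX : IsBirthDeathChain μ X r k)
    (hr : ∀ n, 0 < n → r n ∈ Icc 0 1) (m : ℕ) :
    μ.real {ω | X m ω = 0} + (1 - r 1) * μ.real {ω | X m ω = 1}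
      ≤ μ.real {ω | X (m + 1) ω = 0} := by
  have hlt : ∀ᵐ ω ∂μ, X m ω < k + m + 2 :=
    (ae_le_add_time hX hr m).mono fun ω h => by omega
  rw [measureReal_succ_eq_sum hX hr hlt]
  calc _ = ∑ n ∈ {0, 1}, birthDeathKernel r n 0 * μ.real {ω | X m ω = n} := by
        simp [birthDeathKernel]
    _ ≤ _ := Finset.sum_le_sum_of_subset_of_nonneg (by intro n; simp; omega)
      fun n _ _ => mul_nonneg (birthDeathKernel_nonneg hr n 0) measureReal_nonneg

lemma summable_measureReal_one (hX : IsBirthDeathChain μ X r k)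
    (hr : ∀ n, 0 < n → r n ∈ Icc 0 1) (hr₁ : r 1 < 1) :
    Summable fun m => μ.real {ω | X m ω = 1} := by
  have := hX.isProb
  rw [← summable_mul_left_iff (sub_pos.2 hr₁).ne']
  refine summable_of_sum_range_le (c := 1)
    (fun m => mul_nonneg (sub_nonneg.2 hr₁.le) measureReal_nonneg) fun M => ?_
  calc _ ≤ ∑ m ∈ Finset.range M,
        (μ.real {ω | X (m + 1) ω = 0} - μ.real {ω | X m ω = 0}) :=
        Finset.sum_le_sum fun m _ => by linarith [measureReal_zero_add_le_succ hX hr m]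
    _ = μ.real {ω | X M ω = 0} - μ.real {ω | X 0 ω = 0} :=
        Finset.sum_range_sub (fun m => μ.real {ω | X m ω = 0}) M
    _ ≤ 1 := by linarith [measureReal_le_one (μ := μ) (s := {ω | X M ω = 0}),
        measureReal_nonneg (μ := μ) (s := {ω | X 0 ω = 0})]

lemma summable_measureReal (hX : IsBirthDeathChain μ X r k)
    (hr : ∀ n, 0 < n → r n ∈ Ico 0 1) {n : ℕ} (hn : 0 < n) :
    Summable fun m => μ.real {ω | X m ω = n} := by
  have hr' : ∀ n, 0 < n → r n ∈ Icc 0 1 := fun n hn => Ico_subset_Icc_self (hr n hn)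
  induction n, hn using Nat.le_induction with
  | base => exact summable_measureReal_one hX hr' (hr 1 one_pos).2
  | succ n hn ih =>
    have hr₁ := (hr (n + 1) n.succ_pos).2
    rw [← summable_mul_left_iff (sub_pos.2 hr₁).ne']
    refine ((summable_nat_add_iff 1).2 ih).of_nonneg_of_le
      (fun m => mul_nonneg (sub_nonneg.2 hr₁.le) measureReal_nonneg) fun m => ?_
    have := birthDeathKernel_mul_le_measureReal_succ hX hr' m (n + 1) n
    simpa [birthDeathKernel, show n ≠ n + 1 + 1 by omega] using this

lemma sum_measureReal_eq_one (hX : IsBirthDeathChain μ X r k)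
    (hr : ∀ n, 0 < n → r n ∈ Icc 0 1) {m B : ℕ} (hB : k + m < B) :
    ∑ n ∈ Finset.range B, μ.real {ω | X m ω = n} = 1 := by
  have := hX.isProb
  simpa using (measureReal_eq_sum_inter_of_ae_lt (hX.meas m)
    ((ae_le_add_time hX hr m).mono fun ω h => by omega) MeasurableSet.univ).symm

lemma tendsto_sum_measureReal_Ico_one (hX : IsBirthDeathChain μ X r k)
    (hr : ∀ n, 0 < n → r n ∈ Ico 0 1) (N : ℕ) :
    Tendsto (fun m => ∑ n ∈ Finset.Ico 1 N, μ.real {ω | X m ω = n}) atTop (𝓝 0) := by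
  simpa using tendsto_finsetSum (Finset.Ico 1 N) fun n hn =>
    (summable_measureReal hX hr (Finset.mem_Ico.1 hn).1).tendsto_atTop_zero

variable (hr : ∀ n, 1 ≤ n → r n = (n + 1) / (2 * n + 1))
include hr

lemma sum_harmonic_mul_measureReal (hX : IsBirthDeathChain μ X r k) {m B : ℕ}
    (hB : k + m < B) :
    ∑ n ∈ Finset.range B, (harmonic n : ℝ) * μ.real {ω | X m ω = n} = harmonic k := by
  have := hX.isProb
  have hr' := mem_Icc_of_eq_div hr
  rw [← integral_comp_eq_sum_of_ae_lt (hX.meas m)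
      ((ae_le_add_time hX hr' m).mono fun ω h => by omega),
    integral_comp_eq_of_birthDeathOperator_eq hX hr' (birthDeathOperator_harmonic hr)]

lemma one_sub_le_measureReal_zero (hX : IsBirthDeathChain μ X r k) {N : ℕ} (hN : 1 ≤ N)
    (m : ℕ) :
    1 - harmonic k / harmonic N - ∑ n ∈ Finset.Ico 1 N, μ.real {ω | X m ω = n}
      ≤ μ.real {ω | X m ω = 0} := by
  have := hX.isProb
  set B := N + k + m + 1
  have hr' := mem_Icc_of_eq_div hr
  have hmass := Finset.sum_range_add_sum_Ico (fun n => μ.real {ω | X m ω = n})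
    (show N ≤ B by omega)
  rw [Finset.sum_range_eq_add_Ico _ (by omega : 0 < N),
    sum_measureReal_eq_one hX hr' (by omega : k + m < B)] at hmass
  have hHN : (0 : ℝ) < harmonic N := by linarith [one_le_harmonic_real hN]
  have htail : harmonic N * ∑ n ∈ Finset.Ico N B, μ.real {ω | X m ω = n} ≤ harmonic k :=
    calc _ = ∑ n ∈ Finset.Ico N B, (harmonic N : ℝ) * μ.real {ω | X m ω = n} :=
        Finset.mul_sum ..
      _ ≤ ∑ n ∈ Finset.Ico N B, (harmonic n : ℝ) * μ.real {ω | X m ω = n} :=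
        Finset.sum_le_sum fun n hn => mul_le_mul_of_nonneg_right
          (monotone_harmonic_real (Finset.mem_Ico.1 hn).1) measureReal_nonneg
      _ ≤ ∑ n ∈ Finset.range B, (harmonic n : ℝ) * μ.real {ω | X m ω = n} :=
        Finset.sum_le_sum_of_subset_of_nonneg
          (fun n hn => Finset.mem_range.2 (Finset.mem_Ico.1 hn).2) fun n _ _ =>
            mul_nonneg (by simpa using monotone_harmonic_real n.zero_le) measureReal_nonneg
      _ = harmonic k := sum_harmonic_mul_measureReal hr hX (by omega)
  have : ∑ n ∈ Finset.Ico N B, μ.real {ω | X m ω = n} ≤ harmonic k / harmonic N := by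
    rw [le_div_iff₀ hHN]
    linarith
  linarith

lemma div_harmonic_mul_le_integral (hX : IsBirthDeathChain μ X r k) {N : ℕ} (hN : 1 ≤ N)
    (m : ℕ) :
    N / harmonic N * (harmonic k - harmonic N * ∑ n ∈ Finset.Ico 1 N, μ.real {ω | X m ω = n})
      ≤ ∫ ω, (X m ω : ℝ) ∂μ := by
  have := hX.isProb
  set B := N + k + m + 1
  have hr' := mem_Icc_of_eq_div hr
  rw [integral_comp_eq_sum_of_ae_lt (hX.meas m) (B := B) (f := fun n => (n : ℝ))
    ((ae_le_add_time hX hr' m).mono fun ω h => by omega)]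
  have hsplit := Finset.sum_range_add_sum_Ico
    (fun n => (harmonic n : ℝ) * μ.real {ω | X m ω = n}) (show N ≤ B by omega)
  rw [sum_harmonic_mul_measureReal hr hX (by omega : k + m < B)] at hsplit
  have hHN : (0 : ℝ) < harmonic N := by linarith [one_le_harmonic_real hN]
  have hlow : ∑ n ∈ Finset.range N, (harmonic n : ℝ) * μ.real {ω | X m ω = n}
      ≤ harmonic N * ∑ n ∈ Finset.Ico 1 N, μ.real {ω | X m ω = n} := by
    rw [Finset.sum_range_eq_add_Ico _ (by omega : 0 < N), Finset.mul_sum]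
    simp only [harmonic_zero, Rat.cast_zero, zero_mul, zero_add]
    exact Finset.sum_le_sum fun n hn => mul_le_mul_of_nonneg_right
      (monotone_harmonic_real (Finset.mem_Ico.1 hn).2.le) measureReal_nonneg
  calc _ ≤ N / harmonic N * ∑ n ∈ Finset.Ico N B, harmonic n * μ.real {ω | X m ω = n} :=
        mul_le_mul_of_nonneg_left (by linarith) (by positivity)
    _ = ∑ n ∈ Finset.Ico N B, N / harmonic N * harmonic n * μ.real {ω | X m ω = n} := by
        rw [Finset.mul_sum]
        exact Finset.sum_congr rfl fun n _ => by ring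
    _ ≤ ∑ n ∈ Finset.Ico N B, (n : ℝ) * μ.real {ω | X m ω = n} :=
        Finset.sum_le_sum fun n hn => mul_le_mul_of_nonneg_right (by
          rw [div_mul_eq_mul_div, div_le_iff₀ hHN]
          exact natCast_mul_harmonic_le hN (Finset.mem_Ico.1 hn).1) measureReal_nonneg
    _ ≤ ∑ n ∈ Finset.range B, (n : ℝ) * μ.real {ω | X m ω = n} :=
        Finset.sum_le_sum_of_subset_of_nonneg
          (fun n hn => Finset.mem_range.2 (Finset.mem_Ico.1 hn).2) fun n _ _ =>
            mul_nonneg n.cast_nonneg measureReal_nonneg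

lemma measure_exists_eq_zero (hX : IsBirthDeathChain μ X r k) :
    μ {ω | ∃ m, X m ω = 0} = 1 := by
  have := hX.isProb
  have hlow : ∀ N, 1 ≤ N →
      1 - harmonic k / harmonic N ≤ μ.real {ω | ∃ m, X m ω = 0} := by
    intro N hN
    refine le_of_tendsto' (by simpa using (tendsto_sum_measureReal_Ico_one hX
      (mem_Ico_of_eq_div hr) N).const_sub (1 - (harmonic k : ℝ) / harmonic N)) fun m => ?_
    exact (one_sub_le_measureReal_zero hr hX hN m).trans
      (measureReal_mono fun ω hω => ⟨m, hω⟩)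
  have hlim : Tendsto (fun N => 1 - (harmonic k : ℝ) / harmonic N) atTop (𝓝 1) := by
    simpa using (tendsto_const_nhds.div_atTop tendsto_harmonic_real_atTop).const_sub 1
  rw [← ENNReal.toReal_eq_one_iff]
  exact le_antisymm measureReal_le_one
    (le_of_tendsto hlim ((eventually_ge_atTop 1).mono hlow))

lemma tendsto_integral_atTop (hX : IsBirthDeathChain μ X r k) (hk : 1 ≤ k) :
    Tendsto (fun m => ∫ ω, (X m ω : ℝ) ∂μ) atTop atTop := by
  refine tendsto_atTop.2 fun C => ?_
  obtain ⟨N, hC, hN⟩ := ((tendsto_natCast_div_harmonic_atTop.eventually_gt_atTop C).and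
    (eventually_ge_atTop 1)).exists
  have hlim := ((tendsto_sum_measureReal_Ico_one hX (mem_Ico_of_eq_div hr) N).const_mul
    (harmonic N : ℝ)).const_sub (harmonic k : ℝ) |>.const_mul ((N : ℝ) / harmonic N)
  have hHk := one_le_harmonic_real hk
  have hpos : 0 ≤ (N : ℝ) / harmonic N :=
    div_nonneg N.cast_nonneg (zero_le_one.trans (one_le_harmonic_real hN))
  refine (hlim.eventually_const_lt (u := C) ?_).mono fun m hm => (hm.trans_le
    (div_harmonic_mul_le_integral hr hX hN m)).le
  simp only [mul_zero, sub_zero]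
  nlinarith

end IsBirthDeathChain

/-- The birth-death chain with `lₙ = n/(2n+1)`, `rₙ = (n+1)/(2n+1)` goes extinct almost
surely, yet its expected value tends to infinity. -/
theorem example_chain_extinct_but_mean_diverges {Ω : Type*} [MeasurableSpace Ω]
    (μ : Measure Ω) (X : ℕ → Ω → ℕ) (r : ℕ → ℝ) (k : ℕ) (hk : 1 ≤ k)
    (hr : ∀ n, 1 ≤ n → r n = (n + 1) / (2 * n + 1))
    (hX : IsBirthDeathChain μ X r k) :
    μ {ω | ∃ m, X m ω = 0} = 1 ∧
      Tendsto (fun m => ∫ ω, (X m ω : ℝ) ∂μ) atTop atTop :=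
  ⟨hX.measure_exists_eq_zero hr, hX.tendsto_integral_atTop hr hk⟩
end
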